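/- arXiv:2503.08255 — 4 statements merged into one kernel-verified Lean document; each statement's English description precedes it below -/
import Mathlib

section
/- For every R ∈ SO(3) one has ‖(R − Rᵀ)∨‖² = (3 − tr R)(1 + tr R); consequently, if tr R ≠ −1, then the generalized error vector satisfies ‖e_R(R)‖² = tr[I − R], i.e., its squared Euclidean norm equals the chordal metric of R. -/
/-!
For any `3 × 3` matrix `M`, `‖(M - Mᵀ)∨‖² = tr (M Mᵀ) - tr (M²)`, and `tr (M²) = (tr M)² - 2 tr (adj M)`.
For `R ∈ SO(3)` we have `R Rᵀ = 1` and `adj R = Rᵀ`, so with `t = tr R` this gives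
`‖(R - Rᵀ)∨‖² = 3 - t² + 2t = (3 - t)(1 + t)`. The left side is nonnegative, which forces `t ≥ -1`;
dividing by `1 + t` then gives `‖e_R‖² = 3 - t = tr (I - R)`.
-/

open Matrix

noncomputable section

/-- The cross (hat) map: `x^×` with `x^× y = x × y`. -/
def cross3 (x : Fin 3 → ℝ) : Matrix (Fin 3) (Fin 3) ℝ :=
  !![0, -x 2, x 1; x 2, 0, -x 0; -x 1, x 0, 0]

/-- The vee map: `A∨ = (A₃₂, A₁₃, A₂₁)`. -/
def vee3 (A : Matrix (Fin 3) (Fin 3) ℝ) : Fin 3 → ℝ :=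
  ![A 2 1, A 0 2, A 1 0]

/-- The Rodrigues matrix `R(α,θ) = I + sin θ · α^× + (1-cos θ) · α^×α^×`. -/
def rod (α : Fin 3 → ℝ) (θ : ℝ) : Matrix (Fin 3) (Fin 3) ℝ :=
  1 + Real.sin θ • cross3 α + (1 - Real.cos θ) • (cross3 α * cross3 α)

/-- The error vector `ψ(R) = ½(R - Rᵀ)∨`. -/
def psi3 (R : Matrix (Fin 3) (Fin 3) ℝ) : Fin 3 → ℝ :=
  (1 / 2 : ℝ) • vee3 (R - Rᵀ)

/-- The generalized error vector `e_R(R) = (1/√(1+tr R)) (R - Rᵀ)∨`. -/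
def eR (R : Matrix (Fin 3) (Fin 3) ℝ) : Fin 3 → ℝ :=
  (1 / Real.sqrt (1 + R.trace)) • vee3 (R - Rᵀ)

/-- `E_c(R) = ½((tr R)·I - Rᵀ)`. -/
def Ec (R : Matrix (Fin 3) (Fin 3) ℝ) : Matrix (Fin 3) (Fin 3) ℝ :=
  (1 / 2 : ℝ) • (R.trace • (1 : Matrix (Fin 3) (Fin 3) ℝ) - Rᵀ)

/-- `E(R) = (1/√(1+tr R))(2E_c(R) + ½ e_R e_Rᵀ)`. -/
def Emat (R : Matrix (Fin 3) (Fin 3) ℝ) : Matrix (Fin 3) (Fin 3) ℝ :=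
  (1 / Real.sqrt (1 + R.trace)) •
    ((2 : ℝ) • Ec R + (1 / 2 : ℝ) • vecMulVec (eR R) (eR R))

theorem vee3_sub_transpose_dotProduct_self (M : Matrix (Fin 3) (Fin 3) ℝ) :
    vee3 (M - Mᵀ) ⬝ᵥ vee3 (M - Mᵀ) = (M * Mᵀ).trace - (M * M).trace := by
  simp only [dotProduct, vee3, Matrix.sub_apply, transpose_apply, Fin.sum_univ_three,
    cons_val_zero, cons_val_one, cons_val, trace_fin_three, mul_apply]
  ring

theorem Matrix.trace_mul_self_fin_three {α : Type*} [CommRing α]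
    (M : Matrix (Fin 3) (Fin 3) α) :
    (M * M).trace = M.trace ^ 2 - 2 * M.adjugate.trace := by
  simp only [trace_fin_three, mul_apply, Fin.sum_univ_three, adjugate_fin_three, of_apply,
    cons_val', cons_val_zero, cons_val_fin_one, cons_val_one, cons_val]
  ring

theorem Matrix.adjugate_eq_transpose_of_mul_transpose_eq_one {n α : Type*} [Fintype n]
    [DecidableEq n] [CommRing α] {A : Matrix n n α} (hA : A * Aᵀ = 1) (hdet : A.det = 1) :
    A.adjugate = Aᵀ :=
  calc A.adjugate = A.adjugate * A * Aᵀ := by rw [Matrix.mul_assoc, hA, Matrix.mul_one]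
    _ = Aᵀ := by rw [adjugate_mul, hdet, one_smul, Matrix.one_mul]

theorem eR_dotProduct_self {R : Matrix (Fin 3) (Fin 3) ℝ} (h : 0 ≤ 1 + R.trace) :
    eR R ⬝ᵥ eR R = vee3 (R - Rᵀ) ⬝ᵥ vee3 (R - Rᵀ) / (1 + R.trace) := by
  rw [eR, smul_dotProduct, dotProduct_smul, smul_eq_mul, smul_eq_mul, ← mul_assoc,
    div_mul_div_comm, one_mul, Real.mul_self_sqrt h, one_div_mul_eq_div]

theorem eR_norm_sq_eq_chordal_general (R : Matrix (Fin 3) (Fin 3) ℝ)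
    (hR2 : R * Rᵀ = 1) (hR3 : R.det = 1) :
    vee3 (R - Rᵀ) ⬝ᵥ vee3 (R - Rᵀ) = (3 - R.trace) * (1 + R.trace) ∧
      (R.trace ≠ -1 → eR R ⬝ᵥ eR R = ((1 : Matrix (Fin 3) (Fin 3) ℝ) - R).trace) := by
  have hvee_sq : vee3 (R - Rᵀ) ⬝ᵥ vee3 (R - Rᵀ) = (3 - R.trace) * (1 + R.trace) := by
    rw [vee3_sub_transpose_dotProduct_self, hR2, trace_mul_self_fin_three,
      adjugate_eq_transpose_of_mul_transpose_eq_one hR2 hR3, trace_transpose, trace_one,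
      Fintype.card_fin]
    push_cast
    ring
  refine ⟨hvee_sq, fun htr => ?_⟩
  have hnonneg : 0 ≤ (3 - R.trace) * (1 + R.trace) := hvee_sq ▸ dotProduct_self_star_nonneg _
  have hpos : 0 < 1 + R.trace := by
    contrapose! htr
    nlinarith
  rw [eR_dotProduct_self hpos.le, hvee_sq, mul_div_cancel_right₀ _ hpos.ne', trace_sub, trace_one,
    Fintype.card_fin]
  norm_num

/-- `‖(R-Rᵀ)∨‖² = (3 - tr R)(1 + tr R)` on SO(3); hence for
`tr R ≠ -1` the squared norm of the generalized error vector is the chordal metric. -/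
theorem eR_norm_sq_eq_chordal (R : Matrix (Fin 3) (Fin 3) ℝ)
    (hR1 : Rᵀ * R = 1) (hR2 : R * Rᵀ = 1) (hR3 : R.det = 1) :
    vee3 (R - Rᵀ) ⬝ᵥ vee3 (R - Rᵀ) = (3 - R.trace) * (1 + R.trace) ∧
      (R.trace ≠ -1 → eR R ⬝ᵥ eR R = ((1 : Matrix (Fin 3) (Fin 3) ℝ) - R).trace) :=
  eR_norm_sq_eq_chordal_general R hR2 hR3
end
end

section
/- For any unit vector α ∈ ℝ³ and any θ ∈ ℝ with cos θ ≠ −1, the matrix E evaluated at the Rodrigues matrix admits the axis-angle representation E(R(α,θ)) = (1/√(2 + 2cos θ))·[(1 + cos θ)·I + (sin θ)·α^×]. -/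
open Matrix

noncomputable section

/-!
For a unit axis, `(α^×)² = ααᵀ - I`, so `R(α,θ) = cos θ I + sin θ α^× + (1 - cos θ) ααᵀ`: its trace
is `1 + 2 cos θ` and its skew part is `2 sin θ α^×`. Hence `e_R = (2 sin θ / √(2 + 2 cos θ)) α`,
and in `E` the two multiples of `ααᵀ` cancel because `sin² θ = (1 - cos θ)(1 + cos θ)`.
-/

open Real

lemma cross3_transpose (x : Fin 3 → ℝ) : (cross3 x)ᵀ = -cross3 x := by
  ext i j
  fin_cases i <;> fin_cases j <;> simp [cross3]

lemma trace_cross3 (x : Fin 3 → ℝ) : (cross3 x).trace = 0 := by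
  simp [cross3, trace, Fin.sum_univ_succ]

lemma vee3_cross3 (x : Fin 3 → ℝ) : vee3 (cross3 x) = x := by
  ext i
  fin_cases i <;> simp [vee3, cross3]

lemma vee3_smul (r : ℝ) (A : Matrix (Fin 3) (Fin 3) ℝ) : vee3 (r • A) = r • vee3 A := by
  ext i
  fin_cases i <;> simp [vee3]

lemma cross3_mul_self (x : Fin 3 → ℝ) :
    cross3 x * cross3 x = vecMulVec x x - (x ⬝ᵥ x) • 1 := by
  ext i j
  fin_cases i <;> fin_cases j <;>
    simp [cross3, mul_apply, vecMulVec_apply, dotProduct, Fin.sum_univ_succ] <;> ring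

lemma rod_sub_transpose (α : Fin 3 → ℝ) (θ : ℝ) :
    rod α θ - (rod α θ)ᵀ = (2 * sin θ) • cross3 α := by
  simp only [rod, transpose_add, transpose_smul, transpose_mul, transpose_one, cross3_transpose,
    neg_mul_neg]
  module

section unit_axis

variable {α : Fin 3 → ℝ} (hα : α ⬝ᵥ α = 1) (θ : ℝ)
include hα

lemma rod_eq_of_dotProduct_self :
    rod α θ = cos θ • 1 + sin θ • cross3 α + (1 - cos θ) • vecMulVec α α := by
  rw [rod, cross3_mul_self, hα, one_smul]
  module

lemma trace_rod : (rod α θ).trace = 1 + 2 * cos θ := by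
  rw [rod_eq_of_dotProduct_self hα, trace_add, trace_add, trace_smul, trace_smul,
    trace_smul, trace_one, trace_cross3, trace_vecMulVec, hα]
  simp only [Fintype.card_fin, smul_eq_mul]
  ring

lemma eR_rod : eR (rod α θ) = (2 * sin θ / √(2 + 2 * cos θ)) • α := by
  rw [eR, rod_sub_transpose, vee3_smul, vee3_cross3, trace_rod hα, smul_smul]
  ring_nf

lemma Ec_rod : Ec (rod α θ) = (1 / 2 : ℝ) •
    ((1 + cos θ) • 1 + sin θ • cross3 α - (1 - cos θ) • vecMulVec α α) := by
  rw [Ec, trace_rod hα, rod_eq_of_dotProduct_self hα]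
  simp only [transpose_add, transpose_smul, transpose_one, cross3_transpose, transpose_vecMulVec]
  module

end unit_axis

theorem Emat_rodrigues_axang_general (α : Fin 3 → ℝ)
    (hα : α 0 ^ 2 + α 1 ^ 2 + α 2 ^ 2 = 1) (θ : ℝ) :
    Emat (rod α θ) =
      (1 / Real.sqrt (2 + 2 * Real.cos θ)) •
        ((1 + Real.cos θ) • (1 : Matrix (Fin 3) (Fin 3) ℝ) + Real.sin θ • cross3 α) := by
  have hunit : α ⬝ᵥ α = 1 := by simpa [dotProduct, Fin.sum_univ_succ, sq, add_assoc] using hα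
  have htr : 1 + (rod α θ).trace = 2 + 2 * cos θ := by rw [trace_rod hunit]; ring
  rw [Emat, htr, eR_rod hunit, Ec_rod hunit, smul_vecMulVec, vecMulVec_smul, smul_smul]
  set q := √(2 + 2 * cos θ)
  rcases eq_or_ne q 0 with hq | hq
  · -- `1 / √0 = 0` in Lean, so both sides vanish.
    simp [hq]
  congr 1
  have hq2 : q ^ 2 = 2 + 2 * cos θ := sq_sqrt (by linarith [neg_one_le_cos θ])
  have hcoef : 2 * sin θ / q * (2 * sin θ / q) = 2 * (1 - cos θ) := by
    field_simp
    linear_combination (-(1 - cos θ)) * hq2 + 2 * sin_sq θ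
  linear_combination (norm := module) (1 / 2 : ℝ) • hcoef • vecMulVec α α

/-- axis-angle representation of `E` at the Rodrigues matrix. -/
theorem Emat_rodrigues_axang (α : Fin 3 → ℝ)
    (hα : α 0 ^ 2 + α 1 ^ 2 + α 2 ^ 2 = 1) (θ : ℝ) (hθ : Real.cos θ ≠ -1) :
    Emat (rod α θ) =
      (1 / Real.sqrt (2 + 2 * Real.cos θ)) •
        ((1 + Real.cos θ) • (1 : Matrix (Fin 3) (Fin 3) ℝ) + Real.sin θ • cross3 α) :=
  Emat_rodrigues_axang_general α hα θ
end
end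

section
/- For any unit vector α ∈ ℝ³ and any θ ∈ ℝ with cos θ ≠ −1, the matrices A := (1/√(2 + 2cos θ))·[(1 + cos θ)·I + (sin θ)·α^×] and B := (1/√(2 + 2cos θ))·[(1 + cos θ)·I − (sin θ)·α^× + (1 − cos θ)·ααᵀ] satisfy A·B = B·A = I; that is, the axis-angle expression B is the matrix inverse of the axis-angle expression for E(R(α,θ)). -/
open Matrix

noncomputable section

set_option maxHeartbeats 1000000 in
lemma key (α : Fin 3 → ℝ) (hα : α 0 ^ 2 + α 1 ^ 2 + α 2 ^ 2 = 1) (θ : ℝ) :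
    ((1 + Real.cos θ) • (1 : Matrix (Fin 3) (Fin 3) ℝ) + Real.sin θ • cross3 α) *
      ((1 + Real.cos θ) • (1 : Matrix (Fin 3) (Fin 3) ℝ) - Real.sin θ • cross3 α +
        (1 - Real.cos θ) • vecMulVec α α) = (2 + 2 * Real.cos θ) • 1 ∧
    ((1 + Real.cos θ) • (1 : Matrix (Fin 3) (Fin 3) ℝ) - Real.sin θ • cross3 α +
        (1 - Real.cos θ) • vecMulVec α α) *
      ((1 + Real.cos θ) • (1 : Matrix (Fin 3) (Fin 3) ℝ) + Real.sin θ • cross3 α)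
      = (2 + 2 * Real.cos θ) • 1 := by
  have hs := Real.sin_sq_add_cos_sq θ
  constructor <;>
  · ext i j
    fin_cases i <;> fin_cases j <;>
    · simp [mul_apply, Fin.sum_univ_succ, cross3, vecMulVec_apply, one_apply]
      first
      | linear_combination (α 1 ^ 2 + α 2 ^ 2) * hs + (1 - Real.cos θ ^ 2) * hα
      | linear_combination (α 0 ^ 2 + α 2 ^ 2) * hs + (1 - Real.cos θ ^ 2) * hα
      | linear_combination (α 0 ^ 2 + α 1 ^ 2) * hs + (1 - Real.cos θ ^ 2) * hα
      | linear_combination (-(α 0 * α 1)) * hs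
      | linear_combination (α 0 * α 1) * hs
      | linear_combination (-(α 0 * α 2)) * hs
      | linear_combination (α 0 * α 2) * hs
      | linear_combination (-(α 1 * α 2)) * hs
      | linear_combination (α 1 * α 2) * hs

/-- the two axis-angle expressions are mutually inverse matrices. -/
theorem axang_E_inverse (α : Fin 3 → ℝ)
    (hα : α 0 ^ 2 + α 1 ^ 2 + α 2 ^ 2 = 1) (θ : ℝ) (hθ : Real.cos θ ≠ -1)
    (A B : Matrix (Fin 3) (Fin 3) ℝ)
    (hA : A = (1 / Real.sqrt (2 + 2 * Real.cos θ)) •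
      ((1 + Real.cos θ) • (1 : Matrix (Fin 3) (Fin 3) ℝ) + Real.sin θ • cross3 α))
    (hB : B = (1 / Real.sqrt (2 + 2 * Real.cos θ)) •
      ((1 + Real.cos θ) • (1 : Matrix (Fin 3) (Fin 3) ℝ) - Real.sin θ • cross3 α +
        (1 - Real.cos θ) • vecMulVec α α)) :
    A * B = 1 ∧ B * A = 1 := by
  have hc : -1 < Real.cos θ := lt_of_le_of_ne (Real.neg_one_le_cos θ) (Ne.symm hθ)
  have hpos : (0:ℝ) < 2 + 2 * Real.cos θ := by linarith
  have hsq : Real.sqrt (2 + 2 * Real.cos θ) * Real.sqrt (2 + 2 * Real.cos θ)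
      = 2 + 2 * Real.cos θ := Real.mul_self_sqrt hpos.le
  obtain ⟨h1, h2⟩ := key α hα θ
  subst hA hB
  constructor
  · rw [Matrix.smul_mul, Matrix.mul_smul, h1, smul_smul, smul_smul]
    rw [div_mul_div_comm, one_mul, hsq, one_div, inv_mul_cancel₀ hpos.ne', one_smul]
  · rw [Matrix.smul_mul, Matrix.mul_smul, h2, smul_smul, smul_smul]
    rw [div_mul_div_comm, one_mul, hsq, one_div, inv_mul_cancel₀ hpos.ne', one_smul]
end
end

section
/- Let c : ℝ → ℝ^{3×3} be a curve of 3×3 real matrices, let t ∈ ℝ, and suppose c has derivative D ∈ ℝ^{3×3} at t (in the sense of HasDerivAt) and that 1 + tr[c(t)] > 0. Then the curve s ↦ e_R(c(s)) := (1/√(1 + tr[c(s)]))·(c(s) − c(s)ᵀ)∨ has derivative at t equal to (1/√(1 + tr[c(t)]))·(D − Dᵀ)∨ − (tr[D]/(2(1 + tr[c(t)])))·e_R(c(t)). -/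
open Matrix

noncomputable section

attribute [local instance] Matrix.normedAddCommGroup Matrix.normedSpace

def vee3LinearMap : Matrix (Fin 3) (Fin 3) ℝ →ₗ[ℝ] (Fin 3 → ℝ) where
  toFun := vee3
  map_add' _ _ := by ext i; fin_cases i <;> rfl
  map_smul' _ _ := by ext i; fin_cases i <;> rfl

theorem HasDerivAt.vee3 {c : ℝ → Matrix (Fin 3) (Fin 3) ℝ} {D : Matrix (Fin 3) (Fin 3) ℝ} {t : ℝ}
    (hc : HasDerivAt c D t) : HasDerivAt (fun s => vee3 (c s)) (vee3 D) t :=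
  (LinearMap.toContinuousLinearMap vee3LinearMap).hasFDerivAt.comp_hasDerivAt t hc

section MatrixCurves

variable {𝕜 : Type*} [NontriviallyNormedField 𝕜] {m n : Type*} [Fintype m] [Fintype n]
  {t : 𝕜}

theorem HasDerivAt.matrix_transpose {c : 𝕜 → Matrix m n 𝕜} {D : Matrix m n 𝕜}
    (hc : HasDerivAt c D t) : HasDerivAt (fun s => (c s)ᵀ) Dᵀ t :=
  hasDerivAt_pi.2 fun i => hasDerivAt_pi.2 fun j => hasDerivAt_pi.1 (hasDerivAt_pi.1 hc j) i

theorem HasDerivAt.matrix_trace {c : 𝕜 → Matrix n n 𝕜} {D : Matrix n n 𝕜}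
    (hc : HasDerivAt c D t) : HasDerivAt (fun s => (c s).trace) D.trace t :=
  HasDerivAt.fun_sum fun i _ => hasDerivAt_pi.1 (hasDerivAt_pi.1 hc i) i

end MatrixCurves

theorem HasDerivAt.one_div_sqrt {f : ℝ → ℝ} {f' t : ℝ} (hf : HasDerivAt f f' t) (hpos : 0 < f t) :
    HasDerivAt (fun s => 1 / √(f s)) (-(f' / (2 * f t) * (1 / √(f t)))) t := by
  have hsqrt : √(f t) ≠ 0 := (Real.sqrt_pos.2 hpos).ne'
  simp only [one_div]
  refine ((hf.sqrt hpos.ne').inv hsqrt).congr_deriv ?_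
  rw [Real.sq_sqrt hpos.le]
  field_simp

/-- chain rule for the generalized error vector along a matrix curve. -/
theorem hasDerivAt_eR (c : ℝ → Matrix (Fin 3) (Fin 3) ℝ) (t : ℝ)
    (D : Matrix (Fin 3) (Fin 3) ℝ) (hc : HasDerivAt c D t)
    (htr : 1 + (c t).trace > 0) :
    HasDerivAt (fun s => eR (c s))
      ((1 / Real.sqrt (1 + (c t).trace)) • vee3 (D - Dᵀ) -
        (D.trace / (2 * (1 + (c t).trace))) • eR (c t)) t := by
  have hscale := hc.matrix_trace.const_add 1 |>.one_div_sqrt htr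
  have hskew := (hc.fun_sub hc.matrix_transpose).vee3
  refine (hscale.smul hskew).congr_deriv ?_
  rw [eR, smul_smul, neg_smul, ← sub_eq_add_neg]
end
end
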